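/- Let n, k be natural numbers with k ≥ 1 and let H₁, H₂ be real n×k matrices with orthonormal columns (H₁ᵀH₁ = I_k and H₂ᵀH₂ = I_k). Let W₁ and W₂ be the subspaces of Euclidean space ℝ^n spanned by the columns of H₁ and H₂ respectively. Then the ℓ²-operator norm of the k×k matrix H₁ᵀH₂ is the greatest element (a maximum, attained) of the set { ⟨x, y⟩ : x ∈ W₁, y ∈ W₂, ‖x‖ = 1, ‖y‖ = 1 }. In other words, the cosine of the first (smallest) principal angle between W₁ and W₂ equals the largest singular value of H₁ᵀH₂. -/

import Mathlib

open scoped RealInnerProductSpace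
open Matrix

/-!
Since `Hᵢᵀ Hᵢ = 1`, the map `a ↦ Hᵢ a` is an isometry of `ℝᵏ` onto `Wᵢ`, and
`⟪H₁ a, H₂ b⟫ = ⟪a, H₁ᵀ H₂ b⟫`. The set in question is therefore `{⟪a, T b⟫ : ‖a‖ = ‖b‖ = 1}`
with `T = H₁ᵀ H₂`. Cauchy–Schwarz bounds it by `‖T‖`, and the bound is attained at a unit `b`
maximising `‖T b‖` on the (compact) sphere, together with `a = T b / ‖T b‖`.
-/

theorem ContinuousLinearMap.exists_norm_eq_one_norm_apply_eq_opNorm {E F : Type*}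
    [NormedAddCommGroup E] [NormedSpace ℝ E] [ProperSpace E] [Nontrivial E]
    [SeminormedAddCommGroup F] [NormedSpace ℝ F] (f : E →L[ℝ] F) :
    ∃ x, ‖x‖ = 1 ∧ ‖f x‖ = ‖f‖ := by
  have hmem := ((isCompact_sphere (0 : E) 1).image f.continuous.norm).sSup_mem
    ((NormedSpace.sphere_nonempty.mpr zero_le_one).image _)
  rw [f.sSup_sphere_eq_norm] at hmem
  obtain ⟨x, hx, hfx⟩ := hmem
  exact ⟨x, mem_sphere_zero_iff_norm.mp hx, hfx⟩

theorem exists_norm_eq_one_real_inner_eq_norm {F : Type*} [NormedAddCommGroup F]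
    [InnerProductSpace ℝ F] [Nontrivial F] (y : F) : ∃ a : F, ‖a‖ = 1 ∧ ⟪a, y⟫ = ‖y‖ := by
  rcases eq_or_ne y 0 with rfl | hy
  · simpa using exists_norm_eq F zero_le_one
  · refine ⟨‖y‖⁻¹ • y, norm_smul_inv_norm hy, ?_⟩
    rw [real_inner_smul_left, real_inner_self_eq_norm_sq]
    field_simp

theorem ContinuousLinearMap.isGreatest_inner_apply_of_norm_eq_one {E F : Type*}
    [NormedAddCommGroup E] [NormedSpace ℝ E] [ProperSpace E] [Nontrivial E]
    [NormedAddCommGroup F] [InnerProductSpace ℝ F] [Nontrivial F] (T : E →L[ℝ] F) :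
    IsGreatest {r | ∃ a b, ‖a‖ = 1 ∧ ‖b‖ = 1 ∧ r = ⟪a, T b⟫} ‖T‖ := by
  refine ⟨?_, ?_⟩
  · obtain ⟨b, hb, hTb⟩ := T.exists_norm_eq_one_norm_apply_eq_opNorm
    obtain ⟨a, ha, hab⟩ := exists_norm_eq_one_real_inner_eq_norm (T b)
    exact ⟨a, b, ha, hb, by rw [hab, hTb]⟩
  · rintro _ ⟨a, b, ha, hb, rfl⟩
    calc ⟪a, T b⟫ ≤ ‖a‖ * ‖T b‖ := real_inner_le_norm a (T b)
      _ ≤ ‖T‖ := by simpa [ha] using T.le_opNorm_of_le hb.le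

namespace Matrix

variable {𝕜 m n l : Type*} [RCLike 𝕜] [Fintype n] [DecidableEq n]

theorem range_toEuclideanLin (A : Matrix m n 𝕜) :
    LinearMap.range (toEuclideanLin A) =
      Submodule.span 𝕜 (Set.range fun j => WithLp.toLp 2 (fun i => A i j)) := by
  have : toEuclideanLin A = ((WithLp.linearEquiv 2 𝕜 (m → 𝕜)).symm : _ →ₗ[𝕜] _) ∘ₗ
      A.mulVecLin ∘ₗ (WithLp.linearEquiv 2 𝕜 (n → 𝕜) : _ →ₗ[𝕜] _) := rfl
  rw [this, LinearMap.range_comp, LinearMap.range_comp_of_range_eq_top _ (LinearEquiv.range _),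
    range_mulVecLin, Submodule.map_span, ← Set.range_comp]
  rfl

variable [Fintype m] [DecidableEq m] [Fintype l] [DecidableEq l]

theorem inner_toEuclideanLin_toEuclideanLin (A : Matrix m n 𝕜) (B : Matrix m l 𝕜)
    (x : EuclideanSpace 𝕜 n) (y : EuclideanSpace 𝕜 l) :
    inner 𝕜 (toEuclideanLin A x) (toEuclideanLin B y) = inner 𝕜 x (toEuclideanLin (Aᴴ * B) y) := by
  rw [toLpLin_mul (q := 2), toEuclideanLin_conjTranspose_eq_adjoint, LinearMap.comp_apply,
    LinearMap.adjoint_inner_right]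

theorem norm_toEuclideanLin_of_conjTranspose_mul_self_eq_one {A : Matrix m n 𝕜}
    (hA : Aᴴ * A = 1) (x : EuclideanSpace 𝕜 n) : ‖toEuclideanLin A x‖ = ‖x‖ := by
  rw [norm_eq_sqrt_re_inner (𝕜 := 𝕜), inner_toEuclideanLin_toEuclideanLin, hA, toLpLin_one,
    LinearMap.id_apply, ← norm_eq_sqrt_re_inner]

end Matrix

/-- The cosine of the first principal angle between the column spans of two matrices
`H₁`, `H₂` with orthonormal columns equals the largest singular value of `H₁ᵀH₂`,
i.e. the ℓ²-operator norm of `H₁ᵀH₂` is the maximum of `⟪x, y⟫` over unit vectors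
`x ∈ W₁`, `y ∈ W₂`. -/
theorem first_principal_angle_eq_l2_opNorm (n k : ℕ) (hk : 1 ≤ k)
    (H₁ H₂ : Matrix (Fin n) (Fin k) ℝ)
    (hH₁ : H₁ᵀ * H₁ = 1) (hH₂ : H₂ᵀ * H₂ = 1)
    (W₁ W₂ : Submodule ℝ (EuclideanSpace ℝ (Fin n)))
    (hW₁ : W₁ = Submodule.span ℝ (Set.range fun j : Fin k =>
      (WithLp.toLp 2 (fun i : Fin n => H₁ i j) : EuclideanSpace ℝ (Fin n))))
    (hW₂ : W₂ = Submodule.span ℝ (Set.range fun j : Fin k =>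
      (WithLp.toLp 2 (fun i : Fin n => H₂ i j) : EuclideanSpace ℝ (Fin n)))) :
    IsGreatest
      {r : ℝ | ∃ x y : EuclideanSpace ℝ (Fin n),
        x ∈ W₁ ∧ y ∈ W₂ ∧ ‖x‖ = 1 ∧ ‖y‖ = 1 ∧ r = ⟪x, y⟫}
      ‖Matrix.toEuclideanCLM (𝕜 := ℝ) (H₁ᵀ * H₂)‖ := by
  have : Nontrivial (EuclideanSpace ℝ (Fin k)) := by
    have : Nonempty (Fin k) := ⟨⟨0, hk⟩⟩
    infer_instance
  have hnorm₁ := norm_toEuclideanLin_of_conjTranspose_mul_self_eq_one (A := H₁)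
    (by rwa [conjTranspose_eq_transpose_of_trivial])
  have hnorm₂ := norm_toEuclideanLin_of_conjTranspose_mul_self_eq_one (A := H₂)
    (by rwa [conjTranspose_eq_transpose_of_trivial])
  have hinner (a b : EuclideanSpace ℝ (Fin k)) : ⟪toEuclideanLin H₁ a, toEuclideanLin H₂ b⟫ =
      ⟪a, toEuclideanCLM (𝕜 := ℝ) (H₁ᵀ * H₂) b⟫ := by
    rw [inner_toEuclideanLin_toEuclideanLin, conjTranspose_eq_transpose_of_trivial]
    rfl
  convert (toEuclideanCLM (𝕜 := ℝ) (H₁ᵀ * H₂)).isGreatest_inner_apply_of_norm_eq_one using 1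
  ext r
  subst hW₁ hW₂
  simp only [← range_toEuclideanLin, LinearMap.mem_range]
  constructor
  · rintro ⟨_, _, ⟨a, rfl⟩, ⟨b, rfl⟩, ha, hb, rfl⟩
    exact ⟨a, b, hnorm₁ a ▸ ha, hnorm₂ b ▸ hb, hinner a b⟩
  · rintro ⟨a, b, ha, hb, rfl⟩
    exact ⟨_, _, ⟨a, rfl⟩, ⟨b, rfl⟩, (hnorm₁ a).trans ha, (hnorm₂ b).trans hb, (hinner a b).symm⟩
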